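/- Let M = (E,ρ) be a finite matroid of rank d ≥ 1 with #E = m and ℓ loops. Then W_{d−1}^M(p) = (1+p)^{m−ℓ} − 1, where W_i^M(p) := Σ_{S ∈ 𝒮ᵢ^M} μᵢ^M(S) (−p)^{#S−d+1+i}. -/

import Mathlib

open Finset

/-- A matroid on a finite ground set, presented by its (Whitney) rank function:
normalized, monotone, and submodular. -/
structure FinMatroid (α : Type*) [DecidableEq α] [Fintype α] where
  rk : Finset α → ℕ
  rk_le_card : ∀ S, rk S ≤ S.card
  rk_mono : ∀ ⦃S T : Finset α⦄, S ⊆ T → rk S ≤ rk T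
  rk_submod : ∀ S T : Finset α, rk (S ∪ T) + rk (S ∩ T) ≤ rk S + rk T

namespace FinMatroid

variable {α : Type*} [DecidableEq α] [Fintype α]

/-- The rank `ρ(E)` of the matroid. -/
def rank (M : FinMatroid α) : ℕ := M.rk Finset.univ

lemma rk_empty (M : FinMatroid α) : M.rk ∅ = 0 :=
  Nat.le_zero.mp (by simpa using M.rk_le_card ∅)

lemma rk_le_rank (M : FinMatroid α) (S : Finset α) : M.rk S ≤ M.rank :=
  M.rk_mono (Finset.subset_univ S)

/-- A loop is an element of rank zero. -/
def IsLoop (M : FinMatroid α) (e : α) : Prop := M.rk {e} = 0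

/-- A coloop: deleting it lowers the rank. -/
def IsColoop (M : FinMatroid α) (e : α) : Prop :=
  M.rk (Finset.univ.erase e) + 1 = M.rank

/-- A link is an element which is neither a loop nor a coloop. -/
def IsLink (M : FinMatroid α) (e : α) : Prop := ¬ M.IsLoop e ∧ ¬ M.IsColoop e

/-- The embedding of the ground set with `e` removed. -/
def emb (e : α) : {x : α // x ≠ e} ↪ α := Function.Embedding.subtype _

lemma e_not_mem_map (e : α) (S : Finset {x : α // x ≠ e}) : e ∉ S.map (emb e) := by
  simp [emb]

/-- Deletion `M ∖ e` of an element. -/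
def delete (M : FinMatroid α) (e : α) : FinMatroid {x : α // x ≠ e} where
  rk S := M.rk (S.map (emb e))
  rk_le_card S := by simpa using M.rk_le_card (S.map (emb e))
  rk_mono S T h := M.rk_mono (Finset.map_subset_map.mpr h)
  rk_submod S T := by
    have := M.rk_submod (S.map (emb e)) (T.map (emb e))
    rwa [← Finset.map_union, ← Finset.map_inter] at this

/-- Contraction `M / e` of an element. -/
def contract (M : FinMatroid α) (e : α) : FinMatroid {x : α // x ≠ e} where
  rk S := M.rk (insert e (S.map (emb e))) - M.rk {e}
  rk_le_card S := by
    try dsimp only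
    have h1 : M.rk (insert e (S.map (emb e))) ≤ M.rk (S.map (emb e)) + M.rk {e} := by
      have := M.rk_submod (S.map (emb e)) {e}
      have hie : S.map (emb e) ∩ {e} = ∅ := by
        simp [Finset.eq_empty_iff_forall_notMem, emb]
      rw [Finset.union_comm] at this
      rw [← Finset.insert_eq, hie, M.rk_empty] at this; omega
    have h2 := M.rk_le_card (S.map (emb e))
    simp only [Finset.card_map] at h2
    omega
  rk_mono S T h := by
    try dsimp only
    have := M.rk_mono (Finset.insert_subset_insert e ((Finset.map_subset_map (f := emb e)).mpr h))
    omega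
  rk_submod S T := by
    try dsimp only
    have key := M.rk_submod (insert e (S.map (emb e))) (insert e (T.map (emb e)))
    have hU : insert e (S.map (emb e)) ∪ insert e (T.map (emb e))
        = insert e ((S ∪ T).map (emb e)) := by
      rw [Finset.map_union]; ext x
      simp only [Finset.mem_union, Finset.mem_insert]; tauto
    have hI : insert e (S.map (emb e)) ∩ insert e (T.map (emb e))
        = insert e ((S ∩ T).map (emb e)) := by
      rw [Finset.map_inter]; ext x
      simp only [Finset.mem_inter, Finset.mem_insert]; tauto
    rw [hU, hI] at key
    have l1 : M.rk {e} ≤ M.rk (insert e ((S ∪ T).map (emb e))) :=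
      M.rk_mono (by simp)
    have l2 : M.rk {e} ≤ M.rk (insert e ((S ∩ T).map (emb e))) :=
      M.rk_mono (by simp)
    have l3 : M.rk {e} ≤ M.rk (insert e (S.map (emb e))) := M.rk_mono (by simp)
    have l4 : M.rk {e} ≤ M.rk (insert e (T.map (emb e))) := M.rk_mono (by simp)
    omega

/-- The Tutte polynomial
`T_M(x,y) = Σ_{S ⊆ E} (x-1)^{ρ(E)-ρ(S)} (y-1)^{#S-ρ(S)}`, evaluated in a
commutative ring. -/
def tutte (M : FinMatroid α) {R : Type*} [CommRing R] (x y : R) : R :=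
  ∑ S : Finset α, (x - 1) ^ (M.rank - M.rk S) * (y - 1) ^ (S.card - M.rk S)

/-- The specialization `Y_M(q,t) = (1-q)^{ρ(E)} q^{σ(E)} T_M((qt+1-q)/(1-q), 1/q)`. -/
noncomputable def Y (M : FinMatroid α) {K : Type*} [Field K] (q t : K) : K :=
  (1 - q) ^ M.rank * q ^ (Fintype.card α - M.rank) *
    M.tutte ((q * t + 1 - q) / (1 - q)) (1 / q)

open Classical in
/-- The Möbius function `μ(0̂, S)` of the poset obtained from the finsets satisfying `P`
(ordered by inclusion) by adjoining a bottom element `0̂`; by convention `μ(0̂,S) = 0`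
for sets not satisfying `P`. -/
noncomputable def mob (P : Finset α → Prop) : Finset α → ℤ := fun S =>
  if P S then -1 - ∑ T ∈ (S.powerset.erase S).attach, mob P T.1 else 0
termination_by S => S.card
decreasing_by
  have hT := T.2
  simp only [Finset.mem_erase, Finset.mem_powerset] at hT
  exact Finset.card_lt_card (HasSubset.Subset.ssubset_of_ne hT.2 hT.1)

/-- Membership in `𝒮ᵢ^M = {S ⊆ E : ρ(S) ≥ d - i}` (with `i : ℤ`). -/
def Smem (M : FinMatroid α) (i : ℤ) (S : Finset α) : Prop :=
  (M.rank : ℤ) - i ≤ (M.rk S : ℤ)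

/-- The Möbius function `μᵢ^M(S) = μ(0̂, S)` of the lattice `ℒᵢ^M = {0̂} ⊕ 𝒮ᵢ^M`. -/
noncomputable def mu (M : FinMatroid α) (i : ℤ) : Finset α → ℤ := mob (M.Smem i)

/-- `W_i^M(p) = Σ_{S ∈ 𝒮ᵢ^M} μᵢ^M(S) (-p)^{#S-d+1+i}`, evaluated in a commutative
ring.  (Terms with `S ∉ 𝒮ᵢ^M` vanish since `μᵢ^M` is zero there.) -/
noncomputable def W (M : FinMatroid α) (i : ℤ) {R : Type*} [CommRing R] (p : R) : R :=
  ∑ S : Finset α, (M.mu i S : R) * (-p) ^ (((S.card : ℤ) - M.rank + 1 + i).toNat)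

end FinMatroid

namespace FinMatroid

open Classical

variable {α : Type*} [DecidableEq α] [Fintype α]

lemma rk_eq_zero_of_loops (M : FinMatroid α) (S : Finset α)
    (h : ∀ e ∈ S, M.rk {e} = 0) : M.rk S = 0 := by
  induction S using Finset.induction_on with
  | empty => exact M.rk_empty
  | @insert a s ha ih =>
    have hs := ih (fun e he => h e (Finset.mem_insert_of_mem he))
    have ha0 := h a (Finset.mem_insert_self a s)
    have hsub := M.rk_submod {a} s
    have : insert a s = {a} ∪ s := Finset.insert_eq a s
    rw [← this] at hsub
    omega

lemma smem_top_iff (M : FinMatroid α) (S : Finset α) :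
    M.Smem ((M.rank : ℤ) - 1) S ↔ ∃ e ∈ S, M.rk {e} ≠ 0 := by
  unfold Smem
  constructor
  · intro h
    by_contra hc
    push_neg at hc
    have := M.rk_eq_zero_of_loops S hc
    omega
  · rintro ⟨e, he, hne⟩
    have h1 : 1 ≤ M.rk {e} := Nat.one_le_iff_ne_zero.mpr hne
    have h2 := M.rk_mono (Finset.singleton_subset_iff.mpr he)
    omega

lemma mob_powerset_sum (P : Finset α → Prop)
    (hmono : ∀ ⦃T S : Finset α⦄, T ⊆ S → P T → P S) (S : Finset α) (h : P S) :
    ∑ T ∈ S.powerset, mob P T = -1 := by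
  have hS : S ∈ S.powerset := Finset.mem_powerset_self S
  rw [← Finset.insert_erase hS, Finset.sum_insert (Finset.notMem_erase _ _)]
  rw [mob, if_pos h, Finset.sum_attach]
  ring

/-- The claimed explicit value of the top Möbius function. -/
noncomputable def fmu (M : FinMatroid α) (S : Finset α) : ℤ :=
  if S.Nonempty ∧ ∀ e ∈ S, M.rk {e} ≠ 0 then (-1) ^ S.card else 0

lemma fmu_sum (M : FinMatroid α) (S : Finset α) (h : ∃ e ∈ S, M.rk {e} ≠ 0) :
    ∑ T ∈ S.powerset, fmu M T = -1 := by
  set N := S.filter (fun e => M.rk {e} ≠ 0) with hN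
  have hNne : N.Nonempty := by
    obtain ⟨e, he, hne⟩ := h
    exact ⟨e, Finset.mem_filter.mpr ⟨he, hne⟩⟩
  have hsub : N.powerset ⊆ S.powerset :=
    Finset.powerset_mono.mpr (Finset.filter_subset _ _)
  have hstep : ∑ T ∈ S.powerset, fmu M T = ∑ T ∈ N.powerset, fmu M T := by
    refine (Finset.sum_subset hsub ?_).symm
    intro T hT hTn
    rw [Finset.mem_powerset] at hT hTn
    have : ∃ e ∈ T, M.rk {e} = 0 := by
      by_contra hc
      push_neg at hc
      exact hTn (fun e he => Finset.mem_filter.mpr ⟨hT he, hc e he⟩)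
    obtain ⟨e, he, he0⟩ := this
    unfold fmu
    rw [if_neg]
    rintro ⟨-, h2⟩
    exact h2 e he he0
  rw [hstep]
  have hterm : ∀ T ∈ N.powerset,
      fmu M T = (-1 : ℤ) ^ T.card - (if T = ∅ then 1 else 0) := by
    intro T hT
    rw [Finset.mem_powerset] at hT
    rcases eq_or_ne T ∅ with rfl | hTne
    · simp [fmu]
    · have hne : T.Nonempty := Finset.nonempty_iff_ne_empty.mpr hTne
      have hall : ∀ e ∈ T, M.rk {e} ≠ 0 := fun e he =>
        (Finset.mem_filter.mp (hT he)).2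
      unfold fmu
      rw [if_pos ⟨hne, hall⟩, if_neg hTne]
      ring
  rw [Finset.sum_congr rfl hterm, Finset.sum_sub_distrib,
    Finset.sum_powerset_neg_one_pow_card,
    if_neg (Finset.nonempty_iff_ne_empty.mp hNne)]
  rw [Finset.sum_ite_eq' N.powerset (∅ : Finset α) (fun _ => (1 : ℤ))]
  simp

lemma mu_top_eq (M : FinMatroid α) (S : Finset α) :
    M.mu ((M.rank : ℤ) - 1) S = fmu M S := by
  induction S using Finset.strongInduction with
  | _ S ih =>
    unfold mu
    by_cases hP : M.Smem ((M.rank : ℤ) - 1) S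
    · rw [mob, if_pos hP, Finset.sum_attach]
      have hmono : ∀ ⦃T U : Finset α⦄, T ⊆ U →
          M.Smem ((M.rank : ℤ) - 1) T → M.Smem ((M.rank : ℤ) - 1) U := by
        intro T U hTU hT
        rw [smem_top_iff] at hT ⊢
        obtain ⟨e, he, hne⟩ := hT
        exact ⟨e, hTU he, hne⟩
      have hrec : ∀ T ∈ S.powerset.erase S, mob (M.Smem ((M.rank : ℤ) - 1)) T = fmu M T := by
        intro T hT
        rw [Finset.mem_erase, Finset.mem_powerset] at hT
        exact ih T (HasSubset.Subset.ssubset_of_ne hT.2 hT.1)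
      rw [Finset.sum_congr rfl hrec]
      have hfs := fmu_sum M S ((smem_top_iff M S).mp hP)
      have hS : S ∈ S.powerset := Finset.mem_powerset_self S
      rw [← Finset.insert_erase hS, Finset.sum_insert (Finset.notMem_erase _ _)] at hfs
      linarith
    · rw [mob, if_neg hP]
      unfold fmu
      rw [if_neg]
      rintro ⟨⟨e, he⟩, h2⟩
      exact hP ((smem_top_iff M S).mpr ⟨e, he, h2 e he⟩)

end FinMatroid


open Classical in
/-- `W_{d-1}^M(p) = (1+p)^{m-ℓ} - 1`, where `m = #E` and `ℓ` is the
number of loops of `M`. -/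
theorem W_top {α : Type*} [DecidableEq α] [Fintype α] (M : FinMatroid α)
    (hd : 1 ≤ M.rank) {R : Type*} [CommRing R] (p : R) :
    M.W ((M.rank : ℤ) - 1) p =
      (1 + p) ^ (Fintype.card α - (Finset.univ.filter (fun e => M.IsLoop e)).card) - 1 := by
  classical
  unfold FinMatroid.W
  have hexp : ∀ S : Finset α,
      (((S.card : ℤ) - M.rank + 1 + ((M.rank : ℤ) - 1)).toNat) = S.card := by
    intro S; omega
  simp only [hexp, FinMatroid.mu_top_eq M]
  set NL := Finset.univ.filter (fun e => ¬ M.IsLoop e) with hNL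
  have hcard : NL.card = Fintype.card α - (Finset.univ.filter (fun e => M.IsLoop e)).card := by
    have := Finset.card_filter_add_card_filter_not
      (s := (Finset.univ : Finset α)) (p := fun e => M.IsLoop e)
    rw [Finset.card_univ, ← hNL] at this
    omega
  rw [← hcard]
  have hstep : ∑ S : Finset α, (M.fmu S : R) * (-p) ^ S.card
      = ∑ S ∈ NL.powerset, (M.fmu S : R) * (-p) ^ S.card := by
    refine (Finset.sum_subset (Finset.subset_univ _) ?_).symm
    intro S _ hS
    rw [Finset.mem_powerset] at hS
    have : ∃ e ∈ S, M.rk {e} = 0 := by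
      by_contra hc
      push_neg at hc
      refine hS fun e he => ?_
      rw [hNL, Finset.mem_filter]
      exact ⟨Finset.mem_univ e, hc e he⟩
    obtain ⟨e, he, he0⟩ := this
    have : M.fmu S = 0 := by
      unfold FinMatroid.fmu
      rw [if_neg]
      rintro ⟨-, h2⟩
      exact h2 e he he0
    rw [this]
    simp
  rw [hstep]
  have hterm : ∀ S ∈ NL.powerset,
      (M.fmu S : R) * (-p) ^ S.card = p ^ S.card - (if S = ∅ then 1 else 0) := by
    intro S hS
    rw [Finset.mem_powerset] at hS
    rcases eq_or_ne S ∅ with rfl | hSne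
    · simp [FinMatroid.fmu]
    · have hne : S.Nonempty := Finset.nonempty_iff_ne_empty.mpr hSne
      have hall : ∀ e ∈ S, M.rk {e} ≠ 0 := by
        intro e he
        have := hS he
        rw [hNL, Finset.mem_filter] at this
        exact this.2
      have : M.fmu S = (-1) ^ S.card := by
        unfold FinMatroid.fmu
        rw [if_pos ⟨hne, hall⟩]
      rw [this, if_neg hSne]
      push_cast
      rw [← mul_pow]
      norm_num
  rw [Finset.sum_congr rfl hterm, Finset.sum_sub_distrib]
  have hpow : ∑ S ∈ NL.powerset, (p : R) ^ S.card = (1 + p) ^ NL.card := by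
    have := Finset.prod_add (fun _ : α => p) (fun _ : α => (1 : R)) NL
    simp only [Finset.prod_const, Finset.prod_const_one, one_pow, mul_one] at this
    rw [add_comm 1 p]
    exact this.symm
  rw [hpow, Finset.sum_ite_eq' NL.powerset (∅ : Finset α) (fun _ => (1 : R))]
  simp
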